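/- Consider any execution of MGREEDY-RC on a substring-free set S, and let C = s'_{i1}, …, s'_{ir}, s'_{i1} be a cycle it closes when moving the string ⟨s'_{i1},…,s'_{ir}⟩ to T (so the cycle-closing edge goes from s'_{ir} to s'_{i1}). Then the closing edge has the smallest overlap among the edges of the cycle: ov(s'_{ir}, s'_{i1}) ≤ ov(s'_{ik}, s'_{i(k+1)}) for all 1 ≤ k < r. -/

import Mathlib

/-- The DNA alphabet. -/
inductive DNA : Type
  | A | T | G | C
  deriving DecidableEq, Repr

/-- Complement of a DNA base: a↔t, g↔c. -/
def DNA.compl : DNA → DNA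
  | .A => .T
  | .T => .A
  | .G => .C
  | .C => .G

/-- Strings over the DNA alphabet. -/
abbrev Str : Type := List DNA

/-- Reverse complement of a string. -/
def rc (s : Str) : Str := (s.map DNA.compl).reverse

/-- An approximate solution for the SCS-RC instance `S`: a string containing,
for each `s ∈ S`, either `s` or its reverse complement as a substring. -/
def ApproxSol (S : Finset Str) (u : Str) : Prop :=
  ∀ s ∈ S, s <:+: u ∨ rc s <:+: u

/-- `OPT S` is the minimum length of an approximate solution for the SCS-RC instance `S`. -/
noncomputable def OPT (S : Finset Str) : ℕ :=
  sInf {n | ∃ u : Str, ApproxSol S u ∧ u.length = n}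

/-- `S` is substring-free: no string of `S ∪ S̄^R` is a substring of another. -/
def SubstrFree (S : Finset Str) : Prop :=
  ∀ x, (x ∈ S ∨ rc x ∈ S) → ∀ y, (y ∈ S ∨ rc y ∈ S) → x ≠ y → ¬ x <:+: y

/-- `ov x y`: the length of the longest string `v` such that `x = u ++ v` and
`y = v ++ w` for nonempty `u`, `w`. -/
noncomputable def ov (x y : Str) : ℕ :=
  sSup {k | ∃ v : Str, v.length = k ∧ (∃ u : Str, u ≠ [] ∧ x = u ++ v) ∧
        (∃ w : Str, w ≠ [] ∧ y = v ++ w)}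

/-- `prefStr x y = pref(x, y)`: the prefix of `x` with respect to `y`. -/
noncomputable def prefStr (x y : Str) : Str := x.take (x.length - ov x y)

/-- `distStr x y = dist(x, y) = |x| - ov(x, y)`. -/
noncomputable def distStr (x y : Str) : ℕ := x.length - ov x y

/-- The merge `⟨x, y⟩ = pref(x, y) ++ y`. -/
noncomputable def mergeStr (x y : Str) : Str := prefStr x y ++ y

/-- `superstr [x1, …, xr] = ⟨x1, …, xr⟩ = pref(x1,x2) ⋯ pref(x_{r-1},x_r) ++ x_r`. -/
noncomputable def superstr : List Str → Str
  | [] => []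
  | [x] => x
  | x :: y :: rest => prefStr x y ++ superstr (y :: rest)

/-- `‖S‖`: the total length of the strings of the finite set `S`. -/
def normS (S : Finset Str) : ℕ := ∑ s ∈ S, s.length

/-- Pairs `(x, y)` of strings from the collection `S` or their reverse complements,
with `x = y`, or with `x ≠ y` and `rc x ≠ y`, as considered by MGREEDY-RC. -/
def ValidPair (S : Finset Str) (x y : Str) : Prop :=
  (x ∈ S ∨ rc x ∈ S) ∧ (y ∈ S ∨ rc y ∈ S) ∧ (x = y ∨ (x ≠ y ∧ rc x ≠ y))

/-- `MGreedyExec S T`: some execution of MGREEDY-RC starting from the collection `S`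
(under some tie-breaking among pairs of maximum overlap) produces the set `T`. -/
inductive MGreedyExec : Finset Str → Finset Str → Prop
  | done : MGreedyExec ∅ ∅
  | close (S T : Finset Str) (x : Str)
      (hx : x ∈ S ∨ rc x ∈ S)
      (hmax : ∀ a b, ValidPair S a b → ov a b ≤ ov x x)
      (h : MGreedyExec (S \ {x, rc x}) T) :
      MGreedyExec S (insert x T)
  | merge (S T : Finset Str) (x y : Str)
      (hx : x ∈ S ∨ rc x ∈ S) (hy : y ∈ S ∨ rc y ∈ S)
      (hne : x ≠ y) (hrc : rc x ≠ y)
      (hmax : ∀ a b, ValidPair S a b → ov a b ≤ ov x y)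
      (h : MGreedyExec (insert (mergeStr x y) (S \ {x, rc x, y, rc y})) T) :
      MGreedyExec S T

/-- `GreedyExec S u`: some execution of GREEDY-RC starting from the collection `S`
(under some tie-breaking among pairs of maximum overlap) outputs the string `u`. -/
inductive GreedyExec : Finset Str → Str → Prop
  | single (x : Str) : GreedyExec {x} x
  | merge (S : Finset Str) (u x y : Str)
      (hx : x ∈ S ∨ rc x ∈ S) (hy : y ∈ S ∨ rc y ∈ S)
      (hne : x ≠ y) (hrc : rc x ≠ y)
      (hmax : ∀ a b, (a ∈ S ∨ rc a ∈ S) → (b ∈ S ∨ rc b ∈ S) → a ≠ b → rc a ≠ b →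
        ov a b ≤ ov x y)
      (hcard : 1 < S.card)
      (h : GreedyExec (insert (mergeStr x y) (S \ {x, rc x, y, rc y})) u) :
      GreedyExec S u

/-- Reverse complement of a path: the path of the reverse complements, reversed. -/
def rcPath (p : List Str) : List Str := (p.map rc).reverse

/-- Valid pairs for the path-level description of MGREEDY-RC, where each collection
element is the path of original strings composing it, its string value being `superstr`. -/
def ValidPairP (P : Finset (List Str)) (p q : List Str) : Prop :=
  (p ∈ P ∨ rcPath p ∈ P) ∧ (q ∈ P ∨ rcPath q ∈ P) ∧
  (superstr p = superstr q ∨ (superstr p ≠ superstr q ∧ rc (superstr p) ≠ superstr q))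

/-- `MGreedyCyc P C`: the path-level description of an execution of MGREEDY-RC.
Starting from the collection of paths `P`, merging the paths `p` and `q` (adding the
edge from the last vertex of `p` to the first of `q`) when the corresponding strings
are merged, and closing the path `p` into the cycle `p` (with the edge from its last
vertex to its first) when the corresponding string is moved to `T`, some execution
produces the set of closed cycles `C`. -/
inductive MGreedyCyc : Finset (List Str) → Finset (List Str) → Prop
  | done : MGreedyCyc ∅ ∅
  | close (P C : Finset (List Str)) (p : List Str)
      (hp : p ∈ P ∨ rcPath p ∈ P)
      (hmax : ∀ q₁ q₂, ValidPairP P q₁ q₂ →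
        ov (superstr q₁) (superstr q₂) ≤ ov (superstr p) (superstr p))
      (h : MGreedyCyc (P \ {p, rcPath p}) C) :
      MGreedyCyc P (insert p C)
  | merge (P C : Finset (List Str)) (p q : List Str)
      (hp : p ∈ P ∨ rcPath p ∈ P) (hq : q ∈ P ∨ rcPath q ∈ P)
      (hne : superstr p ≠ superstr q) (hrc : rc (superstr p) ≠ superstr q)
      (hmax : ∀ q₁ q₂, ValidPairP P q₁ q₂ →
        ov (superstr q₁) (superstr q₂) ≤ ov (superstr p) (superstr q))
      (h : MGreedyCyc (insert (p ++ q) (P \ {p, rcPath p, q, rcPath q})) C) :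
      MGreedyCyc P C

/-- The weight of the cycle `x1, …, xr, x1` given by the list `[x1, …, xr]`:
`Σ_{i=1}^{r} dist(x_i, x_{i+1})` with indices modulo `r`. -/
noncomputable def cycleWeight (c : List Str) : ℕ :=
  ((c.zip (c.rotate 1)).map fun p => distStr p.1 p.2).sum

/-- `C` is a cycle cover of the distance graph `G_S`: a set of vertex-disjoint cycles
on vertices of `S ∪ S̄^R` such that for each `s ∈ S` exactly one of `s` and `rc s`
is contained in the cycles. -/
def IsCycleCover (S : Finset Str) (C : Finset (List Str)) : Prop :=
  (∀ c ∈ C, c ≠ []) ∧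
  (∀ c ∈ C, c.Nodup) ∧
  (∀ c ∈ C, ∀ d ∈ C, c ≠ d → ∀ x ∈ c, x ∉ d) ∧
  (∀ c ∈ C, ∀ x ∈ c, x ∈ S ∨ rc x ∈ S) ∧
  (∀ s ∈ S, Xor' (∃ c ∈ C, s ∈ c) (∃ c ∈ C, rc s ∈ c))

/-- The total weight of a cycle cover. -/
noncomputable def coverWeight (C : Finset (List Str)) : ℕ := ∑ c ∈ C, cycleWeight c

/-- `minCoverWeight S = w(CYC(G_S))`: the minimum total weight of a cycle cover of `G_S`. -/
noncomputable def minCoverWeight (S : Finset Str) : ℕ :=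
  sInf {n | ∃ C : Finset (List Str), IsCycleCover S C ∧ coverWeight C = n}

/-- `x` is a factor of `s`: `s = x^i ++ y` for some `i ≥ 1` and some prefix `y` of `x`. -/
def IsFactor (x s : Str) : Prop :=
  x ≠ [] ∧ ∃ i : ℕ, 1 ≤ i ∧ ∃ y : Str, y <+: x ∧ s = (List.replicate i x).flatten ++ y

/-- `period s`: the length of the shortest factor of `s`. -/
noncomputable def periodStr (s : Str) : ℕ :=
  sInf {k | ∃ x : Str, IsFactor x s ∧ x.length = k}

open Classical in
/-- `factorStr s`: a shortest factor of `s`. -/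
noncomputable def factorStr (s : Str) : Str :=
  if h : ∃ x : Str, IsFactor x s ∧ x.length = periodStr s then h.choose else []

/-- Two strings are equivalent if the factor of one is a cyclic shift of the factor
of the other. -/
def EquivStr (x y : Str) : Prop :=
  ∃ e f : Str, factorStr x = e ++ f ∧ factorStr y = f ++ e

/-!
Follow the execution at the level of paths with an invariant: every edge `(c, d)` placed so far
has at least the overlap of any pair the algorithm could still join with `c` as left end or `d`
as right end, in particular of `(last σ, head τ)` for any two current paths `σ, τ`. When `p` and
`q` are merged, substring-freeness gives `ov ⟨p⟩ ⟨q⟩ ≤ ov (last p) (head q)`: an occurrence of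
`last p` inside `⟨q⟩` cannot lie in one vertex or contain one, and one straddling an edge of `q`
would overlap its target more than the edge does. By maximality of the merged pair the new edge
therefore dominates every pair still available. Closing `p` joins `(last p, head p)`, a pair
dominated by each edge of `p`.
-/

lemma List.isInfix_append_cases {α : Type*} {x A B : List α} (h : x <:+: A ++ B) :
    x <:+: A ∨ x <:+: B ∨ ∃ u v, u ≠ [] ∧ u <:+ A ∧ v <+: B ∧ x = u ++ v := by
  obtain ⟨s, t, h⟩ := h
  rw [List.append_assoc, List.append_eq_append_iff] at h
  rcases h with ⟨a, hA, hxt⟩ | ⟨c, -, hB⟩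
  · rcases List.append_eq_append_iff.mp hxt with ⟨a', ha, -⟩ | ⟨c', hx, hB⟩
    · exact Or.inl ⟨s, a', by rw [hA, ha, List.append_assoc]⟩
    · by_cases ha : a = []
      · subst ha
        exact Or.inr (Or.inl ⟨[], t, by simp [hx, hB]⟩)
      · exact Or.inr (Or.inr ⟨a, c', ha, ⟨s, hA.symm⟩, ⟨t, hB.symm⟩, hx⟩)
  · exact Or.inr (Or.inl ⟨c, t, by rw [hB, List.append_assoc]⟩)

lemma List.isInfix_append_of_isSuffix_of_isPrefix {α : Type*} {u v A B : List α}
    (hu : u <:+ A) (hv : v <+: B) : u ++ v <:+: A ++ B := by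
  obtain ⟨s, rfl⟩ := hu
  obtain ⟨t, rfl⟩ := hv
  exact ⟨s, t, by simp⟩

lemma List.isInfix_getD_getD {α : Type*} {l : List α} {k : ℕ} (d : α)
    (hk : k + 1 < l.length) : [l.getD k d, l.getD (k + 1) d] <:+: l := by
  refine ⟨l.take k, l.drop (k + 2), ?_⟩
  rw [List.getD_eq_getElem l d (by omega), List.getD_eq_getElem l d hk]
  conv_rhs => rw [← List.take_append_drop k l, List.drop_eq_getElem_cons (by omega),
    List.drop_eq_getElem_cons hk]
  simp

lemma List.Pairwise.rel_head_of_getLast {α : Type*} {R : α → α → Prop} {l : List α}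
    (hl : l.Pairwise R) (hlen : 2 ≤ l.length) {x y : α} (hx : l.getLast? = some x)
    (hy : l.head? = some y) : R y x := by
  obtain ⟨t, rfl⟩ := List.head?_eq_some_iff.mp hy
  have ht : t ≠ [] := by rintro rfl; simp at hlen
  rw [List.getLast?_cons, List.getLast?_eq_some_getLast ht] at hx
  simp only [Option.getD_some, Option.some.injEq] at hx
  exact List.rel_of_pairwise_cons hl (hx ▸ List.getLast_mem ht)

lemma List.isInfix_pair_append {α : Type*} {c d : α} {p q : List α} (h : [c, d] <:+: p ++ q) :
    [c, d] <:+: p ∨ [c, d] <:+: q ∨ (p.getLast? = some c ∧ q.head? = some d) := by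
  rcases List.isInfix_append_cases h with h | h | ⟨u, v, hu, hup, hvq, huv⟩
  · exact Or.inl h
  · exact Or.inr (Or.inl h)
  rcases u with _ | ⟨u₁, _ | ⟨u₂, _ | ⟨u₃, u⟩⟩⟩ <;> simp at hu huv
  · obtain ⟨rfl, rfl⟩ := huv
    obtain ⟨s, rfl⟩ := hup
    obtain ⟨t, rfl⟩ := hvq
    simp
  · obtain ⟨rfl, rfl, rfl⟩ := huv
    exact Or.inl hup.isInfix

@[simp] lemma DNA.compl_compl (a : DNA) : a.compl.compl = a := by cases a <;> rfl

lemma rc_involutive : Function.Involutive rc := fun s => by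
  simp [rc, List.map_reverse, Function.comp_def]

@[simp] lemma rc_rc (s : Str) : rc (rc s) = s := rc_involutive s

@[simp] lemma rc_inj {a b : Str} : rc a = rc b ↔ a = b := rc_involutive.injective.eq_iff

lemma rc_eq_comm {a b : Str} : rc a = b ↔ a = rc b := by
  rw [← rc_inj, rc_rc]

@[simp] lemma rc_append (a b : Str) : rc (a ++ b) = rc b ++ rc a := by simp [rc]

@[simp] lemma length_rc (s : Str) : (rc s).length = s.length := by simp [rc]

@[simp] lemma rc_eq_nil {s : Str} : rc s = [] ↔ s = [] := by simp [rc]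

lemma drop_rc (s : Str) (k : ℕ) : (rc s).drop k = rc (s.take (s.length - k)) := by
  simp [rc, List.drop_reverse, List.map_take]

lemma rc_isInfix_rc {x y : Str} (h : x <:+: y) : rc x <:+: rc y :=
  List.reverse_infix.mpr (h.map _)

lemma rc_isPrefix_rc_of_isSuffix {x y : Str} (h : x <:+ y) : rc x <+: rc y :=
  List.reverse_prefix.mpr (h.map _)

lemma SubstrFree.eq_of_isPrefix {S : Finset Str} (hS : SubstrFree S) {a b X : Str}
    (ha : a ∈ S ∨ rc a ∈ S) (hb : b ∈ S ∨ rc b ∈ S) (haX : a <+: X) (hbX : b <+: X) :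
    a = b := by
  by_contra hab
  rcases le_total a.length b.length with h | h
  · exact hS a ha b hb hab (List.prefix_of_prefix_length_le haX hbX h).isInfix
  · exact hS b hb a ha (Ne.symm hab) (List.prefix_of_prefix_length_le hbX haX h).isInfix

lemma le_ov {x y u v w : Str} (hu : u ≠ []) (hw : w ≠ []) (hx : x = u ++ v) (hy : y = v ++ w) :
    v.length ≤ ov x y :=
  le_csSup ⟨x.length, by rintro k ⟨v, rfl, ⟨u, -, rfl⟩, -⟩; simp⟩ ⟨v, rfl, ⟨u, hu, hx⟩, w, hw, hy⟩

lemma exists_of_ov_pos {x y : Str} (h : 0 < ov x y) :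
    ∃ u v w, u ≠ [] ∧ w ≠ [] ∧ x = u ++ v ∧ y = v ++ w ∧ v.length = ov x y := by
  unfold ov at h ⊢
  have hne : Set.Nonempty {k | ∃ v : Str, v.length = k ∧ (∃ u : Str, u ≠ [] ∧ x = u ++ v) ∧
      (∃ w : Str, w ≠ [] ∧ y = v ++ w)} := by
    by_contra hemp
    rw [Set.not_nonempty_iff_eq_empty.mp hemp, csSup_empty] at h
    exact h.ne rfl
  obtain ⟨v, hv, ⟨u, hu, hx⟩, w, hw, hy⟩ :=
    Nat.sSup_mem hne ⟨x.length, by rintro k ⟨v, rfl, ⟨u, -, rfl⟩, -⟩; simp⟩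
  exact ⟨u, v, w, hu, hw, hx, hy, hv⟩

noncomputable def sufStr (x y : Str) : Str := y.drop (ov x y)

lemma exists_ov_decomp (x y : Str) :
    ∃ v, v.length = ov x y ∧ x = prefStr x y ++ v ∧ y = v ++ sufStr x y := by
  rcases (ov x y).eq_zero_or_pos with h | h
  · exact ⟨[], h.symm, by simp [prefStr, h], by simp [sufStr, h]⟩
  · obtain ⟨u, v, w, -, -, rfl, rfl, hv⟩ := exists_of_ov_pos h
    exact ⟨v, hv, by simp [prefStr, ← hv], by simp [sufStr, ← hv]⟩

lemma prefStr_append (x y : Str) : prefStr x y ++ y = x ++ sufStr x y := by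
  obtain ⟨v, -, hx, hy⟩ := exists_ov_decomp x y
  calc prefStr x y ++ y = prefStr x y ++ v ++ sufStr x y := by rw [List.append_assoc, ← hy]
    _ = x ++ sufStr x y := by rw [← hx]

lemma ov_mono {x y X Y : Str} (hx : x <:+ X) (hy : y <+: Y) : ov x y ≤ ov X Y := by
  rcases (ov x y).eq_zero_or_pos with h | h
  · omega
  obtain ⟨u, v, w, hu, hw, rfl, rfl, hv⟩ := exists_of_ov_pos h
  obtain ⟨s, rfl⟩ := hx
  obtain ⟨t, rfl⟩ := hy
  exact hv ▸ le_ov (by simp [hu]) (by simp [hw]) (List.append_assoc s u v).symm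
    (List.append_assoc v w t)

lemma ov_le_ov_rc (x y : Str) : ov x y ≤ ov (rc y) (rc x) := by
  rcases (ov x y).eq_zero_or_pos with h | h
  · omega
  obtain ⟨u, v, w, hu, hw, rfl, rfl, hv⟩ := exists_of_ov_pos h
  exact hv ▸ length_rc v ▸ le_ov (by simpa) (by simpa) (rc_append v w) (rc_append u v)

lemma ov_rc (x y : Str) : ov (rc y) (rc x) = ov x y :=
  le_antisymm (by simpa using ov_le_ov_rc (rc y) (rc x)) (ov_le_ov_rc x y)

lemma sufStr_rc (x y : Str) : sufStr (rc y) (rc x) = rc (prefStr x y) := by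
  rw [sufStr, ov_rc, drop_rc, prefStr]

lemma ov_le_of_not_isInfix {x y X Y : Str} (hx : x <:+ X) (hy : y <+: Y)
    (hxY : ¬ x <:+: Y) (hyX : ¬ y <:+: X) : ov X Y ≤ ov x y := by
  rcases (ov X Y).eq_zero_or_pos with h | h
  · omega
  obtain ⟨U, V, W, -, -, rfl, rfl, hV⟩ := exists_of_ov_pos h
  have hVX : V <:+ U ++ V := List.suffix_append U V
  have hVY : V <+: V ++ W := List.prefix_append V W
  have hxV : V.length < x.length := by
    by_contra! hle
    exact hxY ((List.suffix_of_suffix_length_le hx hVX hle).isInfix.trans hVY.isInfix)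
  have hyV : V.length < y.length := by
    by_contra! hle
    exact hyX ((List.prefix_of_prefix_length_le hy hVY hle).isInfix.trans hVX.isInfix)
  obtain ⟨u, rfl⟩ := List.suffix_of_suffix_length_le hVX hx hxV.le
  obtain ⟨w, rfl⟩ := List.prefix_of_prefix_length_le hVY hy hyV.le
  exact hV ▸ le_ov (by rintro rfl; simp at hxV) (by rintro rfl; simp at hyV) rfl rfl

lemma superstr_cons_cons (x y : Str) (r : List Str) :
    superstr (x :: y :: r) = prefStr x y ++ superstr (y :: r) := rfl

lemma prefix_superstr_cons (x : Str) (l : List Str) : x <+: superstr (x :: l) := by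
  induction l generalizing x with
  | nil => exact List.prefix_refl x
  | cons y r ih =>
    obtain ⟨v, -, hx, hy⟩ := exists_ov_decomp x y
    have hv : v <+: superstr (y :: r) :=
      (List.prefix_append v _).trans (by rw [← hy]; exact ih y)
    rw [superstr_cons_cons]
    conv_lhs => rw [hx]
    exact (List.prefix_append_right_inj _).mpr hv

lemma prefix_superstr {l : List Str} {y : Str} (h : l.head? = some y) : y <+: superstr l := by
  obtain ⟨t, rfl⟩ := List.head?_eq_some_iff.mp h
  exact prefix_superstr_cons y t

lemma superstr_concat {l : List Str} {w : Str} (hw : l.getLast? = some w) (z : Str) :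
    superstr (l ++ [z]) = superstr l ++ sufStr w z := by
  induction l with
  | nil => simp at hw
  | cons a l ih =>
    cases l with
    | nil =>
      obtain rfl : a = w := by simpa using hw
      exact prefStr_append a z
    | cons b r =>
      rw [List.getLast?_cons_cons] at hw
      rw [List.cons_append, List.cons_append, superstr_cons_cons, ← List.cons_append, ih hw,
        superstr_cons_cons, List.append_assoc]

lemma suffix_superstr {l : List Str} {x : Str} (h : l.getLast? = some x) : x <:+ superstr l := by
  obtain ⟨t, rfl⟩ := List.getLast?_eq_some_iff.mp h
  clear h
  induction t with
  | nil => exact List.suffix_refl x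
  | cons a t ih =>
    cases t with
    | nil => exact List.suffix_append (prefStr a x) x
    | cons b r =>
      rw [List.cons_append, List.cons_append, superstr_cons_cons, ← List.cons_append]
      exact ih.trans (List.suffix_append _ _)

lemma rcPath_involutive : Function.Involutive rcPath := fun p => by
  simp [rcPath, List.map_reverse, Function.comp_def]

@[simp] lemma rcPath_rcPath (p : List Str) : rcPath (rcPath p) = p := rcPath_involutive p

lemma rcPath_eq_comm {p q : List Str} : rcPath p = q ↔ p = rcPath q := by
  rw [← rcPath_involutive.injective.eq_iff, rcPath_rcPath]

@[simp] lemma rcPath_eq_nil {p : List Str} : rcPath p = [] ↔ p = [] := by simp [rcPath]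

@[simp] lemma mem_rcPath {x : Str} {p : List Str} : x ∈ rcPath p ↔ rc x ∈ p := by
  rw [rcPath, List.mem_reverse, List.mem_map]
  exact ⟨by rintro ⟨a, ha, rfl⟩; simpa using ha, fun h => ⟨rc x, h, rc_rc x⟩⟩

@[simp] lemma head?_rcPath (p : List Str) : (rcPath p).head? = p.getLast?.map rc := by
  simp [rcPath, List.head?_reverse, List.getLast?_map]

@[simp] lemma getLast?_rcPath (p : List Str) : (rcPath p).getLast? = p.head?.map rc := by
  simp [rcPath, List.getLast?_reverse, List.head?_map]

lemma isInfix_rcPath {c d : Str} {p : List Str} (h : [c, d] <:+: rcPath p) :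
    [rc d, rc c] <:+: p := by
  simpa [rcPath, Function.comp_def] using List.reverse_infix.mpr (h.map rc)

lemma superstr_rcPath (l : List Str) : superstr (rcPath l) = rc (superstr l) := by
  induction l with
  | nil => rfl
  | cons x l ih =>
    cases l with
    | nil => rfl
    | cons y r =>
      have hlast : (rcPath (y :: r)).getLast? = some (rc y) := by simp
      rw [show rcPath (x :: y :: r) = rcPath (y :: r) ++ [rc x] by simp [rcPath],
        superstr_concat hlast, ih, sufStr_rc, superstr_cons_cons, rc_append]

lemma length_lt_ov_of_straddle {A B V z' u v : Str} (hu : u ≠ []) (huA : u <:+ A)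
    (hvB : v <+: B) (hz'B : z' <+: B) (hVz' : V <+: z') (hx : ¬ u ++ v <:+: A ++ V)
    (hz' : ¬ z' <:+: u ++ v) : V.length < ov (u ++ v) z' := by
  have hvz' : v.length < z'.length := by
    by_contra! hle
    exact hz' ((List.prefix_of_prefix_length_le hz'B hvB hle).isInfix.trans
      (List.suffix_append u v).isInfix)
  obtain ⟨w, hw⟩ := List.prefix_of_prefix_length_le hvB hz'B hvz'.le
  have hVv : V.length < v.length := by
    by_contra! hle
    exact hx (List.isInfix_append_of_isSuffix_of_isPrefix huA
      (List.prefix_of_prefix_length_le ⟨w, hw⟩ hVz' hle))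
  have hw_ne : w ≠ [] := by
    rintro rfl
    simp only [List.append_nil] at hw
    exact hvz'.ne (congrArg List.length hw)
  exact hVv.trans_le (le_ov hu hw_ne rfl hw.symm)

/-- Substring-freeness forbids an occurrence of `x` in `⟨q⟩` inside a single vertex or covering
one; an occurrence straddling an edge `(z, z')` would overlap `z'` more than `z` does. -/
theorem not_isInfix_superstr_of_ov_le {S : Finset Str} (hS : SubstrFree S) {x : Str}
    (hx : x ∈ S ∨ rc x ∈ S) {q : List Str} (hq : q ≠ []) (hqS : ∀ z ∈ q, z ∈ S ∨ rc z ∈ S)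
    (hxq : ∀ z ∈ q, x ≠ z) (hov : ∀ c d, [c, d] <:+: q → ov x d ≤ ov c d) :
    ¬ x <:+: superstr q := by
  induction q with
  | nil => exact absurd rfl hq
  | cons z l ih =>
    cases l with
    | nil => exact hS x hx z (hqS z (by simp)) (hxq z (by simp))
    | cons z' r =>
      obtain ⟨V, hV, hz, hz'⟩ := exists_ov_decomp z z'
      have hinz : ¬ x <:+: z := hS x hx z (hqS z (by simp)) (hxq z (by simp))
      rw [superstr_cons_cons]
      intro h
      rcases List.isInfix_append_cases h with hA | hB | ⟨u, v, hu, huA, hvB, rfl⟩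
      · exact hinz (hA.trans (List.IsPrefix.isInfix ⟨V, hz.symm⟩))
      · exact ih (by simp) (fun w hw => hqS w (by simp [hw])) (fun w hw => hxq w (by simp [hw]))
          (fun c d hcd => hov c d (hcd.trans (List.suffix_cons z _).isInfix)) hB
      · have hlt := length_lt_ov_of_straddle hu huA hvB (prefix_superstr_cons z' r)
          ⟨_, hz'.symm⟩ (fun h' => hinz (by rwa [← hz] at h'))
          (hS z' (hqS z' (by simp)) _ hx (hxq z' (by simp)).symm)
        have := hov z z' ⟨[], r, rfl⟩
        omega

def Apart (a b : Str) : Prop := a ≠ b ∧ rc a ≠ b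

lemma Apart.symm {a b : Str} (h : Apart a b) : Apart b a :=
  ⟨h.1.symm, fun h' => h.2 (by rw [← h', rc_rc])⟩

@[simp] lemma apart_rc_left {a b : Str} : Apart (rc a) b ↔ Apart a b := by
  simp only [Apart, rc_rc]; tauto

lemma pairwise_apart_rcPath {p : List Str} (h : p.Pairwise Apart) : (rcPath p).Pairwise Apart := by
  rw [rcPath, List.pairwise_reverse, List.pairwise_map]
  exact h.imp fun hab => apart_rc_left.mpr (apart_rc_left.mpr hab).symm

def RcDisjoint (p q : List Str) : Prop := ∀ a ∈ p, ∀ b ∈ q, Apart a b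

lemma RcDisjoint.symm {p q : List Str} (h : RcDisjoint p q) : RcDisjoint q p :=
  fun a ha b hb => (h b hb a ha).symm

lemma RcDisjoint.rcPath_left {p q : List Str} (h : RcDisjoint p q) : RcDisjoint (rcPath p) q :=
  fun a ha b hb => apart_rc_left.mp (h (rc a) (mem_rcPath.mp ha) b hb)

lemma RcDisjoint.append_left {p q r : List Str} (hp : RcDisjoint p r) (hq : RcDisjoint q r) :
    RcDisjoint (p ++ q) r := by
  intro a ha b hb
  rcases List.mem_append.mp ha with ha | ha
  exacts [hp a ha b hb, hq a ha b hb]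

section Collection

variable {P : Finset (List Str)}

def MemRc (P : Finset (List Str)) (p : List Str) : Prop := p ∈ P ∨ rcPath p ∈ P

@[simp] lemma memRc_rcPath {p : List Str} : MemRc P (rcPath p) ↔ MemRc P p := by
  rw [MemRc, MemRc, rcPath_rcPath, or_comm]

lemma MemRc.of_forall_mem {Q : List Str → Prop} (hQ : ∀ p, Q p → Q (rcPath p))
    (hP : ∀ p ∈ P, Q p) {p : List Str} (h : MemRc P p) : Q p :=
  h.elim (hP p) fun h' => by simpa using hQ _ (hP _ h')

def IsTail (P : Finset (List Str)) (a : Str) : Prop := ∃ σ, MemRc P σ ∧ σ.getLast? = some a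

def IsHead (P : Finset (List Str)) (b : Str) : Prop := ∃ τ, MemRc P τ ∧ τ.head? = some b

lemma isHead_iff_isTail_rc {b : Str} : IsHead P b ↔ IsTail P (rc b) := by
  constructor
  · rintro ⟨τ, hτ, hb⟩
    exact ⟨rcPath τ, memRc_rcPath.mpr hτ, by simp [hb]⟩
  · rintro ⟨σ, hσ, ha⟩
    exact ⟨rcPath σ, memRc_rcPath.mpr hσ, by simp [ha]⟩

/-- The edge `(c, d)` has at least the overlap of every pair the algorithm could still join
using `c` as left end or `d` as right end. -/
def Dominates (P : Finset (List Str)) (c d : Str) : Prop :=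
  ∀ a b, (a = c ∨ IsTail P a) → (b = d ∨ IsHead P b) → rc a ≠ b → ov a b ≤ ov c d

lemma Dominates.reverse {c d : Str} (h : Dominates P c d) : Dominates P (rc d) (rc c) := by
  intro a b ha hb hab
  have ha' : rc a = d ∨ IsHead P (rc a) := by
    rwa [rc_eq_comm, isHead_iff_isTail_rc, rc_rc]
  have hb' : rc b = c ∨ IsTail P (rc b) := by
    rwa [rc_eq_comm, ← isHead_iff_isTail_rc]
  simpa [ov_rc] using h (rc b) (rc a) hb' ha' (by simpa [eq_comm, rc_eq_comm] using hab)

lemma Dominates.mono {P' : Finset (List Str)} {c d : Str} (h : Dominates P c d)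
    (hP' : ∀ a, IsTail P' a → IsTail P a) : Dominates P' c d := by
  intro a b ha hb hab
  refine h a b (ha.imp_right (hP' a)) (hb.imp_right fun hb => ?_) hab
  exact isHead_iff_isTail_rc.mpr (hP' _ (isHead_iff_isTail_rc.mp hb))

lemma MemRc.mono {Q : Finset (List Str)} (hPQ : P ⊆ Q) {σ : List Str} (h : MemRc P σ) :
    MemRc Q σ :=
  h.imp (@hPQ _) (@hPQ _)

lemma IsTail.mono {Q : Finset (List Str)} (hPQ : P ⊆ Q) {a : Str} (h : IsTail P a) :
    IsTail Q a :=
  let ⟨σ, hσ, ha⟩ := h; ⟨σ, hσ.mono hPQ, ha⟩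

lemma MemRc.of_insert {m σ : List Str} (h : MemRc (insert m P) σ) :
    σ = m ∨ σ = rcPath m ∨ MemRc P σ := by
  rcases h with h | h <;> rcases Finset.mem_insert.mp h with h | h
  · exact Or.inl h
  · exact Or.inr (Or.inr (Or.inl h))
  · exact Or.inr (Or.inl (rcPath_eq_comm.mp h))
  · exact Or.inr (Or.inr (Or.inr h))

lemma IsTail.of_merge {p q : List Str} (hp : MemRc P p) (hq : MemRc P q) (hp₀ : p ≠ [])
    (hq₀ : q ≠ []) {a : Str} (ha : IsTail (insert (p ++ q) (P \ {p, rcPath p, q, rcPath q})) a) :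
    IsTail P a := by
  obtain ⟨σ, hσ, ha⟩ := ha
  rcases hσ.of_insert with rfl | rfl | hσ
  · exact ⟨q, hq, by simpa [List.getLast?_append, hq₀] using ha⟩
  · exact ⟨rcPath p, memRc_rcPath.mpr hp, by simpa [hp₀] using ha⟩
  · exact ⟨σ, hσ.mono Finset.sdiff_subset, ha⟩

end Collection

section Invariant

variable {S : Finset Str} {P : Finset (List Str)}

/-- Stated for the paths of `P` only; the primed lemmas below transfer it to their reverse
complements. -/
structure GreedyInv (S : Finset Str) (P : Finset (List Str)) : Prop where
  ne_nil : ∀ p ∈ P, p ≠ []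
  mem : ∀ p ∈ P, ∀ x ∈ p, x ∈ S ∨ rc x ∈ S
  pairwise : ∀ p ∈ P, p.Pairwise Apart
  rcDisjoint : ∀ p ∈ P, ∀ q ∈ P, q ≠ p → q ≠ rcPath p → RcDisjoint p q
  dominates : ∀ p ∈ P, ∀ c d, [c, d] <:+: p → Dominates P c d

lemma GreedyInv.ne_nil' (hinv : GreedyInv S P) {p : List Str} (hp : MemRc P p) : p ≠ [] :=
  hp.of_forall_mem (fun _ h => by simpa using h) hinv.ne_nil

lemma GreedyInv.mem' (hinv : GreedyInv S P) {p : List Str} (hp : MemRc P p) :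
    ∀ x ∈ p, x ∈ S ∨ rc x ∈ S :=
  hp.of_forall_mem (fun _ h x hx => by simpa [or_comm] using h (rc x) (mem_rcPath.mp hx))
    hinv.mem

lemma GreedyInv.pairwise' (hinv : GreedyInv S P) {p : List Str} (hp : MemRc P p) :
    p.Pairwise Apart :=
  hp.of_forall_mem (Q := fun p => p.Pairwise Apart) (fun _ => pairwise_apart_rcPath) hinv.pairwise

lemma GreedyInv.dominates' (hinv : GreedyInv S P) {p : List Str} (hp : MemRc P p) {c d : Str}
    (hcd : [c, d] <:+: p) : Dominates P c d :=
  hp.of_forall_mem (Q := fun p => ∀ c d, [c, d] <:+: p → Dominates P c d)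
    (fun _ h c d hcd => by simpa using (h _ _ (isInfix_rcPath hcd)).reverse) hinv.dominates c d hcd

lemma GreedyInv.rcDisjoint' (hinv : GreedyInv S P) {p q : List Str} (hp : MemRc P p)
    (hq : MemRc P q) (hqp : q ≠ p) (hqp' : q ≠ rcPath p) : RcDisjoint p q := by
  refine hp.of_forall_mem (Q := fun p => ∀ q, MemRc P q → q ≠ p → q ≠ rcPath p → RcDisjoint p q)
    (fun p h q hq h₁ h₂ => (h q hq (by simpa using h₂) h₁).rcPath_left) (fun p hp q hq => ?_)
    q hq hqp hqp'
  refine hq.of_forall_mem (Q := fun q => q ≠ p → q ≠ rcPath p → RcDisjoint p q)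
    (fun q h h₁ h₂ => ?_) (hinv.rcDisjoint p hp)
  exact (h (fun e => h₂ (by rw [e])) (fun e => h₁ (by rw [e, rcPath_rcPath]))).symm.rcPath_left.symm

lemma GreedyInv.isTail_mem (hinv : GreedyInv S P) {a : Str} (ha : IsTail P a) :
    a ∈ S ∨ rc a ∈ S :=
  let ⟨_, hσ, h⟩ := ha; hinv.mem' hσ a (List.mem_of_getLast? h)

lemma GreedyInv.not_isInfix_superstr (hS : SubstrFree S) (hinv : GreedyInv S P) {σ : List Str}
    (hσ : MemRc P σ) {a : Str} (ha : IsTail P a) (hapart : ∀ z ∈ σ, Apart a z) :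
    ¬ a <:+: superstr σ :=
  not_isInfix_superstr_of_ov_le hS (hinv.isTail_mem ha) (hinv.ne_nil' hσ) (hinv.mem' hσ)
    (fun z hz => (hapart z hz).1) fun c d hcd =>
      hinv.dominates' hσ hcd a d (Or.inr ha) (Or.inl rfl) (hapart d (hcd.subset (by simp))).2

lemma GreedyInv.ov_superstr_le (hS : SubstrFree S) (hinv : GreedyInv S P) {p q : List Str}
    (hp : MemRc P p) (hq : MemRc P q) (hpq : RcDisjoint p q) {x y : Str}
    (hx : p.getLast? = some x) (hy : q.head? = some y) :
    ov (superstr p) (superstr q) ≤ ov x y := by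
  refine ov_le_of_not_isInfix (suffix_superstr hx) (prefix_superstr hy)
    (hinv.not_isInfix_superstr hS hq ⟨p, hp, hx⟩ fun z hz => hpq x (List.mem_of_getLast? hx) z hz)
    fun h => ?_
  refine hinv.not_isInfix_superstr hS (memRc_rcPath.mpr hp)
    (isHead_iff_isTail_rc.mp ⟨q, hq, hy⟩) (fun z hz => ?_)
    (by rw [superstr_rcPath]; exact rc_isInfix_rc h)
  have hzy := hpq _ (mem_rcPath.mp hz) y (List.mem_of_head? hy)
  exact apart_rc_left.mpr (apart_rc_left.mp hzy).symm

lemma GreedyInv.validPairP (hS : SubstrFree S) (hinv : GreedyInv S P) {σ τ : List Str}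
    (hσ : MemRc P σ) (hτ : MemRc P τ) {a b : Str} (ha : σ.getLast? = some a)
    (hb : τ.head? = some b) (hab : rc a ≠ b) : ValidPairP P σ τ := by
  refine ⟨hσ, hτ, or_iff_not_imp_left.mpr fun h => ⟨h, fun hrc => hab ?_⟩⟩
  have hrca : rc a <+: superstr τ := hrc ▸ rc_isPrefix_rc_of_isSuffix (suffix_superstr ha)
  exact hS.eq_of_isPrefix (by simpa [or_comm] using hinv.mem' hσ a (List.mem_of_getLast? ha))
    (hinv.mem' hτ b (List.mem_of_head? hb)) hrca (prefix_superstr hb)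

lemma GreedyInv.dominates_junction (hS : SubstrFree S) (hinv : GreedyInv S P)
    {p q : List Str} (hp : MemRc P p) (hq : MemRc P q) (hpq : RcDisjoint p q)
    (hmax : ∀ q₁ q₂, ValidPairP P q₁ q₂ →
      ov (superstr q₁) (superstr q₂) ≤ ov (superstr p) (superstr q))
    {x y : Str} (hx : p.getLast? = some x) (hy : q.head? = some y) : Dominates P x y := by
  rintro a b ha hb hab
  obtain ⟨σ, hσ, haσ⟩ : IsTail P a := ha.elim (fun h => ⟨p, hp, h ▸ hx⟩) id
  obtain ⟨τ, hτ, hbτ⟩ : IsHead P b := hb.elim (fun h => ⟨q, hq, h ▸ hy⟩) id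
  calc ov a b ≤ ov (superstr σ) (superstr τ) := ov_mono (suffix_superstr haσ) (prefix_superstr hbτ)
    _ ≤ ov (superstr p) (superstr q) := hmax σ τ (hinv.validPairP hS hσ hτ haσ hbτ hab)
    _ ≤ ov x y := hinv.ov_superstr_le hS hp hq hpq hx hy

lemma GreedyInv.init (S : Finset Str) : GreedyInv S (S.image fun s => [s]) := by
  refine ⟨?_, ?_, ?_, ?_, ?_⟩ <;>
    simp only [Finset.mem_image, forall_exists_index, and_imp, forall_apply_eq_imp_iff₂]
  · simp
  · intro s hs x hx
    exact Or.inl (List.mem_singleton.mp hx ▸ hs)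
  · simp
  · intro s _ t _ h₁ h₂ a ha b hb
    obtain rfl := List.mem_singleton.mp ha
    obtain rfl := List.mem_singleton.mp hb
    exact ⟨fun e => h₁ (by rw [e]), fun e => h₂ (by simp [rcPath, e])⟩
  · intro s _ c d h
    simpa using h.length_le

lemma GreedyInv.anti {Q : Finset (List Str)} (hinv : GreedyInv S P) (hQP : Q ⊆ P) :
    GreedyInv S Q where
  ne_nil p hp := hinv.ne_nil p (hQP hp)
  mem p hp := hinv.mem p (hQP hp)
  pairwise p hp := hinv.pairwise p (hQP hp)
  rcDisjoint p hp q hq := hinv.rcDisjoint p (hQP hp) q (hQP hq)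
  dominates p hp c d hcd := (hinv.dominates p (hQP hp) c d hcd).mono fun _ => IsTail.mono hQP

lemma GreedyInv.merge (hS : SubstrFree S) (hinv : GreedyInv S P) {p q : List Str}
    (hp : MemRc P p) (hq : MemRc P q) (hne : superstr p ≠ superstr q)
    (hrc : rc (superstr p) ≠ superstr q)
    (hmax : ∀ q₁ q₂, ValidPairP P q₁ q₂ →
      ov (superstr q₁) (superstr q₂) ≤ ov (superstr p) (superstr q)) :
    GreedyInv S (insert (p ++ q) (P \ {p, rcPath p, q, rcPath q})) := by
  set P' := insert (p ++ q) (P \ {p, rcPath p, q, rcPath q})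
  have hpq : RcDisjoint p q := hinv.rcDisjoint' hp hq (fun h => hne (h ▸ rfl))
    (fun h => hrc (by rw [h, superstr_rcPath]))
  have hp₀ := hinv.ne_nil' hp
  have hq₀ := hinv.ne_nil' hq
  have hmem_old : ∀ r ∈ P', r ≠ p ++ q → r ∈ P ∧ r ≠ p ∧ r ≠ rcPath p ∧ r ≠ q ∧ r ≠ rcPath q := by
    intro r hr hr'
    simpa [P', not_or] using (Finset.mem_insert.mp hr).resolve_left hr'
  have hdisj_new : ∀ r ∈ P', r ≠ p ++ q → RcDisjoint (p ++ q) r := by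
    intro r hr hr'
    obtain ⟨hrP, h₁, h₂, h₃, h₄⟩ := hmem_old r hr hr'
    exact (hinv.rcDisjoint' hp (.inl hrP) h₁ h₂).append_left (hinv.rcDisjoint' hq (.inl hrP) h₃ h₄)
  refine ⟨fun r hr => ?_, fun r hr => ?_, fun r hr => ?_, fun r hr r' hr' h₁ h₂ => ?_,
    fun r hr c d hcd => ?_⟩
  · by_cases hr' : r = p ++ q
    · simp [hr', hp₀]
    · exact hinv.ne_nil r (hmem_old r hr hr').1
  · by_cases hr' : r = p ++ q
    · simpa [hr', or_imp, forall_and] using ⟨hinv.mem' hp, hinv.mem' hq⟩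
    · exact hinv.mem r (hmem_old r hr hr').1
  · by_cases hr' : r = p ++ q
    · exact hr' ▸ List.pairwise_append.mpr ⟨hinv.pairwise' hp, hinv.pairwise' hq, hpq⟩
    · exact hinv.pairwise r (hmem_old r hr hr').1
  · by_cases hr₀ : r = p ++ q <;> by_cases hr₀' : r' = p ++ q
    · exact absurd (hr₀'.trans hr₀.symm) h₁
    · exact hr₀ ▸ hdisj_new r' hr' hr₀'
    · exact hr₀' ▸ (hdisj_new r hr hr₀).symm
    · exact hinv.rcDisjoint r (hmem_old r hr hr₀).1 r' (hmem_old r' hr' hr₀').1 h₁ h₂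
  · refine Dominates.mono ?_ fun _ => IsTail.of_merge hp hq hp₀ hq₀
    by_cases hr' : r = p ++ q
    · rcases List.isInfix_pair_append (hr' ▸ hcd) with hcd | hcd | ⟨hc, hd⟩
      · exact hinv.dominates' hp hcd
      · exact hinv.dominates' hq hcd
      · exact hinv.dominates_junction hS hp hq hpq hmax hc hd
    · exact hinv.dominates r (hmem_old r hr hr').1 c d hcd

theorem GreedyInv.ov_closing_edge_le (hS : SubstrFree S) {C : Finset (List Str)}
    (hex : MGreedyCyc P C) (hinv : GreedyInv S P) {p : List Str} (hp : p ∈ C) {c d x y : Str}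
    (hcd : [c, d] <:+: p) (hx : p.getLast? = some x) (hy : p.head? = some y) :
    ov x y ≤ ov c d := by
  induction hex with
  | done => simp at hp
  | close P C p' hp' _ _ ih =>
    rcases Finset.mem_insert.mp hp with rfl | hp
    · exact hinv.dominates' hp' hcd x y (Or.inr ⟨p, hp', hx⟩) (Or.inr ⟨p, hp', hy⟩)
        ((hinv.pairwise' hp').rel_head_of_getLast hcd.length_le hx hy).symm.2
    · exact ih (hinv.anti Finset.sdiff_subset) hp
  | merge P C p' q' hp' hq' hne hrc hmax _ ih => exact ih (hinv.merge hS hp' hq' hne hrc hmax) hp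

end Invariant

/-- in any execution of MGREEDY-RC, the closing edge of each closed
cycle has the smallest overlap among the edges of the cycle. -/
theorem closing_edge_smallest_overlap
    (S : Finset Str) (hS : SubstrFree S)
    (C : Finset (List Str)) (hex : MGreedyCyc (S.image fun s => [s]) C)
    (p : List Str) (hp : p ∈ C) (hpne : p ≠ [])
    (k : ℕ) (hk : k + 1 < p.length) :
    ov (p.getLast hpne) (p.head hpne) ≤ ov (p.getD k []) (p.getD (k + 1) []) :=
  (GreedyInv.init S).ov_closing_edge_le hS hex hp (List.isInfix_getD_getD [] hk)
    (List.getLast?_eq_some_getLast hpne) (List.head?_eq_some_head hpne)
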